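/- Let G be a connected bipartite graph and n ≥ 3 an odd integer. Then κ(G × C_n) = min{n·κ(G), 2·δ(G)}. -/

import Mathlib

open SimpleGraph

universe u v

variable {α : Type u} {β : Type v}

/-- Direct (tensor) product of two simple graphs. -/
def SimpleGraph.tensorProd (G : SimpleGraph α) (H : SimpleGraph β) :
    SimpleGraph (α × β) where
  Adj x y := G.Adj x.1 y.1 ∧ H.Adj x.2 y.2
  symm := ⟨fun x y h => ⟨h.1.symm, h.2.symm⟩⟩
  loopless := ⟨fun x h => G.loopless.irrefl x.1 h.1⟩

/-- Direct (tensor) product of a family of simple graphs. -/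
def SimpleGraph.piTensorProd {ι : Type*} {V : ι → Type*}
    (G : ∀ i, SimpleGraph (V i)) : SimpleGraph (∀ i, V i) where
  Adj f g := f ≠ g ∧ ∀ i, (G i).Adj (f i) (g i)
  symm := ⟨fun f g h => ⟨h.1.symm, fun i => (h.2 i).symm⟩⟩
  loopless := ⟨fun f h => h.1 rfl⟩

/-- `S` is a vertex cut of `G`: deleting `S` leaves a disconnected graph. -/
def SimpleGraph.IsVertexCut (G : SimpleGraph α) (S : Set α) : Prop :=
  ¬ (G.induce Sᶜ).Connected

/-- Vertex connectivity: minimum size of a set `S` such that `G - S` is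
disconnected or has at most one vertex. -/
noncomputable def SimpleGraph.vConn (G : SimpleGraph α) : ℕ :=
  sInf {n | ∃ S : Set α, S.ncard = n ∧
    (G.IsVertexCut S ∨ Nat.card α ≤ n + 1)}

/-- Minimum degree (via neighbor set cardinalities). -/
noncomputable def SimpleGraph.minDeg (G : SimpleGraph α) : ℕ :=
  sInf {d | ∃ v, (G.neighborSet v).ncard = d}

/-- A minimum vertex cut. -/
def SimpleGraph.IsMinVertexCut (G : SimpleGraph α) (S : Set α) : Prop :=
  G.IsVertexCut S ∧ S.ncard = G.vConn

/-- `G` is super connected: every minimum vertex cut is the neighborhood of a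
vertex of minimum degree. -/
def SimpleGraph.SuperConnected (G : SimpleGraph α) : Prop :=
  ∀ S : Set α, G.IsMinVertexCut S →
    ∃ v, (G.neighborSet v).ncard = G.minDeg ∧ S = G.neighborSet v

/-- `(X, Y)` is a bipartition of `G`. -/
def SimpleGraph.IsBipartition (G : SimpleGraph α) (X Y : Set α) : Prop :=
  Disjoint X Y ∧ X ∪ Y = Set.univ ∧
    ∀ u v, G.Adj u v → (u ∈ X ∧ v ∈ Y) ∨ (u ∈ Y ∧ v ∈ X)

/-- The graph `G̃ₙ`: vertex set `α × ZMod n`, with for each `i` a copy `Hᵢ`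
of `G` on `(Xᵢ, Yᵢ)` and a copy `Hᵢ'` of `G` on `(Xᵢ₊₁, Yᵢ)`. -/
def tildeG (G : SimpleGraph α) (X Y : Set α) (n : ℕ) :
    SimpleGraph (α × ZMod n) where
  Adj a b := G.Adj a.1 b.1 ∧
    ((a.1 ∈ X ∧ b.1 ∈ Y ∧ (a.2 = b.2 ∨ a.2 = b.2 + 1)) ∨
     (a.1 ∈ Y ∧ b.1 ∈ X ∧ (b.2 = a.2 ∨ b.2 = a.2 + 1)))
  symm := ⟨fun a b h => ⟨h.1.symm, by tauto⟩⟩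
  loopless := ⟨fun a h => G.loopless.irrefl a.1 h.1⟩

/-! Properly 2-colour `G` by `c`. For odd `n` the Chinese remainder theorem places every vertex
`(u, i)` of `G × Cₙ` in a layer of `ZMod (2n)`, the residue that is `c u` mod 2 and `i` mod `n`.
Edges join adjacent layers, every vertex has `δ(G)` neighbours in each adjacent layer, and each
pair of consecutive layers `k - 1, k` carries a copy of `G`; every vertex lies in two copies.

The cuts `S × Cₙ`, for `S` a minimum cut of `G`, and the `2δ(G)` neighbours of a vertex give the
upper bound. Conversely let `S` disconnect `G × Cₙ` with `|S| < 2δ(G)`. A component of the rest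
missing two layers would be fenced off from them by `δ(G)` vertices of `S` on each side, so every
component meets every pair of consecutive layers. Hence `S` cuts each of the `2n` copies of `G`,
and `2|S| ≥ 2n κ(G)`. -/

namespace ZMod

variable {m : ℕ} [NeZero m]

theorem eq_univ_of_add_one_mem {T : Set (ZMod m)} (hT : ∀ x ∈ T, x + 1 ∈ T) {a : ZMod m}
    (ha : a ∈ T) : T = Set.univ := by
  have hk : ∀ k : ℕ, a + k ∈ T := by
    intro k
    induction k with
    | zero => simpa using ha
    | succ k ih => simpa [add_assoc] using hT _ ih
  refine Set.eq_univ_of_forall fun t => ?_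
  simpa using hk (t - a).val

theorem eq_univ_of_sub_one_mem {T : Set (ZMod m)} (hT : ∀ x ∈ T, x - 1 ∈ T) {a : ZMod m}
    (ha : a ∈ T) : T = Set.univ := by
  have h := eq_univ_of_add_one_mem (T := -T)
    (fun x hx => by rw [Set.mem_neg, neg_add']; exact hT _ hx) (a := -a)
    (by simpa using ha)
  rw [← neg_neg T, h, Set.neg_univ]

theorem exists_ne_sub_one_mem_add_one_mem {T : Set (ZMod m)} (hT : T.Nonempty) {a b : ZMod m}
    (ha : a ∉ T) (hb : b ∉ T) (hab : a ≠ b) :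
    ∃ c ∉ T, ∃ d ∉ T, c ≠ d ∧ c - 1 ∈ T ∧ d + 1 ∈ T := by
  obtain ⟨c, hc, hc'⟩ : ∃ c ∉ T, c - 1 ∈ T := by
    by_contra! h
    obtain ⟨t, ht⟩ := hT
    exact Set.eq_univ_iff_forall.1 (eq_univ_of_sub_one_mem (T := Tᶜ) h ha) t ht
  refine ⟨c, hc, ?_⟩
  by_contra! h
  have hclosed : ∀ x ∈ Tᶜ \ {c}, x + 1 ∈ Tᶜ \ {c} := by
    rintro x ⟨hx, hxc⟩
    refine ⟨h x hx (Ne.symm hxc) hc', fun hx1c => hx ?_⟩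
    rwa [← hx1c, add_sub_cancel_right] at hc'
  obtain ⟨e, he⟩ : (Tᶜ \ {c}).Nonempty := by
    rcases eq_or_ne a c with rfl | hac
    · exact ⟨b, hb, hab.symm⟩
    · exact ⟨a, ha, hac⟩
  exact (Set.eq_univ_iff_forall.1 (eq_univ_of_add_one_mem hclosed he) c).2 rfl

end ZMod

theorem Set.ncard_inter_preimage_pair {V X : Type*} [Finite V] (S : Set V) (f : V → X) {a b : X}
    (hab : a ≠ b) :
    (S ∩ f ⁻¹' {a, b}).ncard = (S ∩ f ⁻¹' {a}).ncard + (S ∩ f ⁻¹' {b}).ncard := by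
  rw [Set.insert_eq, Set.preimage_union, Set.inter_union_distrib_left, Set.ncard_union_eq]
  exact ((Set.disjoint_singleton.2 hab).preimage f).mono Set.inter_subset_right
    Set.inter_subset_right

theorem Set.sum_ncard_inter_preimage_singleton {V X : Type*} [Finite V] [Fintype X]
    (S : Set V) (f : V → X) : ∑ x, (S ∩ f ⁻¹' {x}).ncard = S.ncard := by
  classical
  have := Fintype.ofFinite V
  rw [Set.ncard_eq_toFinset_card' S, Finset.card_eq_sum_card_fiberwise (f := f)
    (t := Finset.univ) fun _ _ => Finset.mem_univ _]
  refine Finset.sum_congr rfl fun x _ => ?_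
  rw [Set.ncard_eq_toFinset_card']
  congr 1
  ext
  simp

namespace SimpleGraph

variable {V W : Type*} {H : SimpleGraph V}

theorem IsVertexCut.vConn_le_ncard {S : Set V} (hS : H.IsVertexCut S) : H.vConn ≤ S.ncard :=
  Nat.sInf_le ⟨S, rfl, Or.inl hS⟩

theorem vConn_eq_zero_of_card_le_one (H : SimpleGraph V) (hV : Nat.card V ≤ 1) : H.vConn = 0 :=
  Nat.sInf_eq_zero.2 (Or.inl ⟨∅, Set.ncard_empty V, Or.inr hV⟩)

theorem isVertexCut_univ : H.IsVertexCut Set.univ := fun hc =>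
  hc.nonempty.some.2 (Set.mem_univ _)

theorem exists_ncard_eq_vConn (H : SimpleGraph V) :
    ∃ S : Set V, S.ncard = H.vConn ∧ (H.IsVertexCut S ∨ Nat.card V ≤ H.vConn + 1) :=
  Nat.sInf_mem
    (s := {n | ∃ S : Set V, S.ncard = n ∧ (H.IsVertexCut S ∨ Nat.card V ≤ n + 1)})
    ⟨_, Set.univ, rfl, Or.inl isVertexCut_univ⟩

theorem vConn_le_card_sub_one (H : SimpleGraph V) : H.vConn ≤ Nat.card V - 1 := by
  by_cases hV : Nat.card V ≤ 1
  · simp [H.vConn_eq_zero_of_card_le_one hV]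
  have : Finite V := Nat.finite_of_card_ne_zero (by omega)
  obtain ⟨v⟩ : Nonempty V := (Nat.card_ne_zero.1 (by omega)).1
  have hcard : ({v}ᶜ : Set V).ncard = Nat.card V - 1 := by
    rw [Set.ncard_compl, Set.ncard_singleton]
  exact Nat.sInf_le ⟨_, hcard, Or.inr (by omega)⟩

theorem vConn_le_ncard_neighborSet [Finite V] (v : V) : H.vConn ≤ (H.neighborSet v).ncard := by
  by_cases hw : ∃ w, w ≠ v ∧ ¬ H.Adj v w
  · obtain ⟨w, hwv, hvw⟩ := hw
    refine IsVertexCut.vConn_le_ncard fun hc => ?_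
    -- in `H - N(v)` the vertex `v` is isolated
    obtain ⟨p⟩ := hc.preconnected ⟨v, H.loopless.irrefl v⟩ ⟨w, hvw⟩
    cases p with
    | nil => exact hwv rfl
    | cons h _ => exact (Set.mem_compl_iff _ _).1 (Subtype.prop _) h
  · push Not at hw
    have huniv : insert v (H.neighborSet v) = Set.univ :=
      Set.eq_univ_of_forall fun w => (eq_or_ne w v).imp id (hw w)
    refine Nat.sInf_le ⟨_, rfl, Or.inr ?_⟩
    calc Nat.card V = (insert v (H.neighborSet v)).ncard := by rw [huniv, Set.ncard_univ]
      _ ≤ _ := Set.ncard_insert_le _ _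

theorem minDeg_le_ncard_neighborSet (v : V) : H.minDeg ≤ (H.neighborSet v).ncard :=
  Nat.sInf_le ⟨v, rfl⟩

theorem exists_ncard_neighborSet_eq_minDeg [Nonempty V] :
    ∃ v, (H.neighborSet v).ncard = H.minDeg :=
  Nat.sInf_mem (s := {d | ∃ v, (H.neighborSet v).ncard = d}) ⟨_, Classical.arbitrary V, rfl⟩

theorem IsVertexCut.preimage {H' : SimpleGraph W} {T : Set W} (hT : H'.IsVertexCut T)
    (φ : H →g H') (hφ : Function.Surjective φ) : H.IsVertexCut (φ ⁻¹' T) := fun hc =>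
  hT <| hc.map (induceHom φ fun _ => id) fun w => by
    obtain ⟨v, hv⟩ := hφ w.1
    exact ⟨⟨v, show φ v ∈ Tᶜ from hv ▸ w.2⟩, Subtype.ext hv⟩

theorem tensorProd_neighborSet (G : SimpleGraph V) (H : SimpleGraph W) (v : V × W) :
    (G.tensorProd H).neighborSet v = G.neighborSet v.1 ×ˢ H.neighborSet v.2 :=
  rfl

theorem IsVertexCut.prod_univ {G : SimpleGraph V} {S : Set V} (hS : G.IsVertexCut S)
    (H : SimpleGraph W) [Nonempty W] : (G.tensorProd H).IsVertexCut (S ×ˢ Set.univ) := by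
  rw [Set.prod_univ]
  exact hS.preimage (⟨Prod.fst, fun h => h.1⟩ : G.tensorProd H →g G) Prod.fst_surjective

structure CyclicLayering (P : SimpleGraph V) (G : SimpleGraph W) (m d : ℕ) where
  layer : V → ZMod m
  copy : ZMod m → G →g P
  bijOn_copy (k : ZMod m) : Set.BijOn (copy k) Set.univ (layer ⁻¹' {k - 1, k})
  le_ncard_adj_layer_add_one (v : V) : d ≤ {w | P.Adj v w ∧ layer w = layer v + 1}.ncard
  le_ncard_adj_layer_sub_one (v : V) : d ≤ {w | P.Adj v w ∧ layer w = layer v - 1}.ncard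

namespace CyclicLayering

variable {P : SimpleGraph V} {G : SimpleGraph W} {m d : ℕ} (L : P.CyclicLayering G m d)

def layersOf {S : Set V} (C : (P.induce Sᶜ).ConnectedComponent) : Set (ZMod m) :=
  {k | ∃ v ∈ C.supp, L.layer v = k}

theorem ncard_preimage_copy {S : Set V} (k : ZMod m) :
    (L.copy k ⁻¹' S).ncard = (S ∩ L.layer ⁻¹' {k - 1, k}).ncard := by
  rw [← ((L.bijOn_copy k).injOn.mono (Set.subset_univ _)).ncard_image, ← Set.univ_inter
    (L.copy k ⁻¹' S), Set.image_inter_preimage, (L.bijOn_copy k).image_eq, Set.inter_comm]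

variable [Finite V] {S : Set V}

theorem le_ncard_inter_layer {C : (P.induce Sᶜ).ConnectedComponent} {k : ZMod m}
    (hk : k ∉ L.layersOf C) (hk' : k - 1 ∈ L.layersOf C ∨ k + 1 ∈ L.layersOf C) :
    d ≤ (S ∩ L.layer ⁻¹' {k}).ncard := by
  have hS : ∀ q ∈ C.supp, ∀ w, P.Adj q w → L.layer w = k →
      w ∈ S ∩ L.layer ⁻¹' {k} := by
    refine fun q hq w hqw hw => ⟨by_contra fun hwS => hk ⟨⟨w, hwS⟩, ?_, hw⟩, hw⟩
    rw [ConnectedComponent.mem_supp_iff] at hq ⊢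
    rw [← hq]
    exact (ConnectedComponent.connectedComponentMk_eq_of_adj
      (show (P.induce Sᶜ).Adj q ⟨w, hwS⟩ from hqw)).symm
  rcases hk' with ⟨q, hq, hqk⟩ | ⟨q, hq, hqk⟩
  · refine (L.le_ncard_adj_layer_add_one q).trans (Set.ncard_le_ncard ?_)
    exact fun w ⟨hqw, hw⟩ => hS q hq w hqw (by rw [hw, hqk, sub_add_cancel])
  · refine (L.le_ncard_adj_layer_sub_one q).trans (Set.ncard_le_ncard ?_)
    exact fun w ⟨hqw, hw⟩ => hS q hq w hqw (by rw [hw, hqk, add_sub_cancel_right])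

/-- A component of `P - S` missing two layers misses two layers next to layers it meets, and
the `d` neighbours there of a vertex of the component all lie in `S`. -/
theorem two_mul_le_ncard [NeZero m] {C : (P.induce Sᶜ).ConnectedComponent} {a b : ZMod m}
    (ha : a ∉ L.layersOf C) (hb : b ∉ L.layersOf C) (hab : a ≠ b) : 2 * d ≤ S.ncard := by
  obtain ⟨v, hv⟩ := C.nonempty_supp
  obtain ⟨c, hc, e, he, hce, hc', he'⟩ :=
    ZMod.exists_ne_sub_one_mem_add_one_mem (T := L.layersOf C) ⟨_, v, hv, rfl⟩ ha hb hab
  calc 2 * d ≤ (S ∩ L.layer ⁻¹' {c}).ncard + (S ∩ L.layer ⁻¹' {e}).ncard := by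
        have := L.le_ncard_inter_layer hc (Or.inl hc')
        have := L.le_ncard_inter_layer he (Or.inr he')
        omega
    _ = (S ∩ L.layer ⁻¹' {c, e}).ncard := (Set.ncard_inter_preimage_pair S _ hce).symm
    _ ≤ S.ncard := Set.ncard_le_ncard Set.inter_subset_left

theorem isVertexCut_preimage_copy [Fact (1 < m)] (hS : P.IsVertexCut S) (hSd : S.ncard < 2 * d)
    (k : ZMod m) : G.IsVertexCut (L.copy k ⁻¹' S) := by
  intro hG
  let φ : G.induce (L.copy k ⁻¹' S)ᶜ →g P.induce Sᶜ := induceHom (L.copy k) fun _ => id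
  obtain ⟨u₀⟩ := hG.nonempty
  -- every component of `P - S` meets layer `k - 1` or `k`, hence the connected image of
  -- `G - copy⁻¹ S`
  have hreach : ∀ v, (P.induce Sᶜ).Reachable (φ u₀) v := by
    intro v
    obtain ⟨x, hx, hxk⟩ : ∃ x ∈ (P.induce Sᶜ).connectedComponentMk v |>.supp,
        L.layer x ∈ ({k - 1, k} : Set (ZMod m)) := by
      by_contra! h
      refine hSd.not_ge (L.two_mul_le_ncard (C := (P.induce Sᶜ).connectedComponentMk v)
        (a := k - 1) (b := k) ?_ ?_ fun h' => one_ne_zero (sub_eq_self.1 h'))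
      · exact fun ⟨x, hx, hxk⟩ => h x hx (Or.inl hxk)
      · exact fun ⟨x, hx, hxk⟩ => h x hx (Or.inr hxk)
    obtain ⟨u, -, hu⟩ := (L.bijOn_copy k).surjOn hxk
    let u' : ↥(L.copy k ⁻¹' S)ᶜ := ⟨u, show L.copy k u ∈ Sᶜ from hu ▸ x.2⟩
    have hux : φ u' = x := Subtype.ext hu
    refine ((hG.preconnected u₀ u').map φ).trans ?_
    rw [hux]
    exact ConnectedComponent.exact ((ConnectedComponent.mem_supp_iff _ _).1 hx)
  exact hS ((connected_iff _).2 ⟨fun v w => (hreach v).symm.trans (hreach w), ⟨φ u₀⟩⟩)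

theorem sum_ncard_preimage_copy [Fact (1 < m)] (S : Set V) :
    ∑ k, (L.copy k ⁻¹' S).ncard = 2 * S.ncard := by
  simp_rw [L.ncard_preimage_copy, Set.ncard_inter_preimage_pair S _
    fun h => one_ne_zero (sub_eq_self.1 h), Finset.sum_add_distrib]
  have hshift :
      ∑ k, (S ∩ L.layer ⁻¹' {k - 1}).ncard = ∑ k, (S ∩ L.layer ⁻¹' {k}).ncard :=
    Fintype.sum_equiv (Equiv.subRight 1) _ _ fun _ => rfl
  rw [hshift, Set.sum_ncard_inter_preimage_singleton, two_mul]

theorem mul_card_eq (L : P.CyclicLayering G m d) [Fact (1 < m)] :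
    m * Nat.card W = 2 * Nat.card V := by
  simpa [ZMod.card] using L.sum_ncard_preimage_copy Set.univ

theorem min_le_vConn {n : ℕ} [NeZero n] (L : P.CyclicLayering G (2 * n) d) :
    min (n * G.vConn) (2 * d) ≤ P.vConn := by
  have : Fact (1 < 2 * n) := ⟨by have := NeZero.pos n; omega⟩
  obtain ⟨S, hS, hcut | hcard⟩ := P.exists_ncard_eq_vConn
  · rw [← hS]
    by_cases hSd : S.ncard < 2 * d
    · refine min_le_of_left_le (Nat.le_of_mul_le_mul_left ?_ two_pos)
      calc 2 * (n * G.vConn) = ∑ _k : ZMod (2 * n), G.vConn := by simp [ZMod.card, mul_assoc]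
        _ ≤ ∑ k, (L.copy k ⁻¹' S).ncard := Finset.sum_le_sum fun k _ =>
            (L.isVertexCut_preimage_copy hcut hSd k).vConn_le_ncard
        _ = 2 * S.ncard := L.sum_ncard_preimage_copy S
    · exact min_le_of_right_le (by omega)
  · have hW := L.mul_card_eq
    have := NeZero.pos n
    calc min (n * G.vConn) (2 * d) ≤ n * (Nat.card W - 1) :=
          min_le_of_left_le (Nat.mul_le_mul_left _ G.vConn_le_card_sub_one)
      _ = n * Nat.card W - n := Nat.mul_sub_one _ _
      _ ≤ P.vConn := by rw [mul_assoc] at hW; omega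

end CyclicLayering

theorem cycleGraph_adj_iff {n : ℕ} [NeZero n] (hn : 2 ≤ n) {i j : Fin n} :
    (cycleGraph n).Adj i j ↔ j = i + 1 ∨ j = i - 1 := by
  obtain ⟨k, rfl⟩ : ∃ k, n = k + 2 := ⟨n - 2, by omega⟩
  rw [cycleGraph_adj, sub_eq_iff_eq_add', sub_eq_iff_eq_add', eq_sub_iff_add_eq,
    eq_comm (a := i), or_comm]

theorem ncard_neighborSet_cycleGraph {n : ℕ} (hn : 3 ≤ n) (i : Fin n) :
    ((cycleGraph n).neighborSet i).ncard = 2 := by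
  obtain ⟨k, rfl⟩ : ∃ k, n = k + 3 := ⟨n - 3, by omega⟩
  rw [← cycleGraph_degree_three_le (v := i), ← card_neighborSet_eq_degree,
    Set.ncard_eq_toFinset_card', Set.toFinset_card]

theorem Coloring.eq_add_one_of_adj {G : SimpleGraph V} (c : G.Coloring (ZMod 2)) {u w : V}
    (h : G.Adj u w) : c w = c u + 1 := by
  have key : ∀ a b : ZMod 2, a ≠ b → b = a + 1 := by decide
  exact key _ _ (c.valid h)

namespace TensorCycle

variable {G : SimpleGraph V} (c : G.Coloring (ZMod 2)) {n : ℕ} (hcop : Nat.Coprime 2 n)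

local notation "e" => ZMod.chineseRemainder hcop

/-- The one of the layers `k - 1`, `k` in which the `k`-th copy of `G` places `u`. -/
def copyLayer (k : ZMod (2 * n)) (u : V) : ZMod (2 * n) :=
  if ((e) k).1 = c u then k else k - 1

theorem fst_copyLayer (k : ZMod (2 * n)) (u : V) : ((e) (copyLayer c hcop k u)).1 = c u := by
  unfold copyLayer
  split_ifs with h
  · exact h
  · have key : ∀ a b : ZMod 2, a ≠ b → a - 1 = b := by decide
    rw [map_sub, map_one, Prod.fst_sub, Prod.fst_one, key _ _ h]

theorem copyLayer_mem (k : ZMod (2 * n)) (u : V) :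
    copyLayer c hcop k u ∈ ({k - 1, k} : Set (ZMod (2 * n))) := by
  unfold copyLayer
  split_ifs
  exacts [Or.inr rfl, Or.inl rfl]

theorem copyLayer_eq {k x : ZMod (2 * n)} (hx : x ∈ ({k - 1, k} : Set (ZMod (2 * n)))) {u : V}
    (hxu : ((e) x).1 = c u) : copyLayer c hcop k u = x := by
  have hk : ((e) (k - 1)).1 ≠ ((e) k).1 := by
    have key : ∀ a : ZMod 2, a - 1 ≠ a := by decide
    simp [key]
  unfold copyLayer
  rcases hx with rfl | rfl
  · rw [if_neg (hxu ▸ hk.symm)]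
  · rw [if_pos hxu]

variable [NeZero n]

local notation "ι" => ZMod.finEquiv n

/-- The layer of `(u, i)` is the residue mod `2 * n` that is `c u` mod `2` and `i` mod `n`
(Chinese remainder theorem, `n` being odd), so that edges of `G × Cₙ` join adjacent layers. -/
def layer (v : V × Fin n) : ZMod (2 * n) := (e).symm (c v.1, ι v.2)

theorem layer_eq_iff {v : V × Fin n} {x : ZMod (2 * n)} :
    layer c hcop v = x ↔ c v.1 = ((e) x).1 ∧ ι v.2 = ((e) x).2 := by
  rw [layer, RingEquiv.symm_apply_eq, Prod.ext_iff]

theorem layer_eq_add_iff {v w : V × Fin n} (h : G.Adj v.1 w.1) {ε : ZMod (2 * n)}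
    (hε : ((e) ε).1 = 1) :
    layer c hcop w = layer c hcop v + ε ↔ ι w.2 = ι v.2 + ((e) ε).2 := by
  rw [layer_eq_iff, map_add, layer, RingEquiv.apply_symm_apply]
  simp [hε, c.eq_add_one_of_adj h]

theorem adj_iff (hn : 2 ≤ n) {v w : V × Fin n} :
    (G.tensorProd (cycleGraph n)).Adj v w ↔ G.Adj v.1 w.1 ∧
      (layer c hcop w = layer c hcop v + 1 ∨ layer c hcop w = layer c hcop v - 1) := by
  refine and_congr_right fun h => ?_
  rw [sub_eq_add_neg, layer_eq_add_iff c hcop h (by simp),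
    layer_eq_add_iff c hcop h (by simp [CharTwo.neg_eq]), cycleGraph_adj_iff hn]
  simp [← sub_eq_add_neg, (ι).injective.eq_iff.symm]

theorem setOf_adj_layer_eq_add (hn : 2 ≤ n) (v : V × Fin n)
    {ε : ZMod (2 * n)} (hε : ε = 1 ∨ ε = -1) :
    {w | (G.tensorProd (cycleGraph n)).Adj v w ∧ layer c hcop w = layer c hcop v + ε} =
      G.neighborSet v.1 ×ˢ {(ι).symm (ι v.2 + ((e) ε).2)} := by
  have hε1 : ((e) ε).1 = 1 := by
    rcases hε with rfl | rfl <;> simp [CharTwo.neg_eq]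
  ext w
  simp only [Set.mem_ofPred_eq, adj_iff c hcop hn, Set.mem_prod, mem_neighborSet,
    Set.mem_singleton_iff, RingEquiv.eq_symm_apply]
  constructor
  · rintro ⟨⟨h, -⟩, hw⟩
    exact ⟨h, (layer_eq_add_iff c hcop h hε1).1 hw⟩
  · rintro ⟨h, hw⟩
    have hw' := (layer_eq_add_iff c hcop h hε1).2 hw
    refine ⟨⟨h, ?_⟩, hw'⟩
    rcases hε with rfl | rfl
    · exact Or.inl hw'
    · exact Or.inr (hw'.trans (sub_eq_add_neg _ _).symm)

theorem minDeg_le_ncard_setOf_adj_layer_eq_add (hn : 2 ≤ n) (v : V × Fin n)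
    {ε : ZMod (2 * n)} (hε : ε = 1 ∨ ε = -1) :
    G.minDeg ≤ {w | (G.tensorProd (cycleGraph n)).Adj v w ∧
      layer c hcop w = layer c hcop v + ε}.ncard := by
  rw [setOf_adj_layer_eq_add c hcop hn v hε, Set.ncard_prod, Set.ncard_singleton, mul_one]
  exact minDeg_le_ncard_neighborSet v.1

theorem layer_mk_copyLayer (k : ZMod (2 * n)) (u : V) :
    layer c hcop (u, (ι).symm ((e) (copyLayer c hcop k u)).2) = copyLayer c hcop k u :=
  (layer_eq_iff c hcop).2 ⟨(fst_copyLayer c hcop k u).symm, RingEquiv.apply_symm_apply _ _⟩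

def copy (hn : 2 ≤ n) (k : ZMod (2 * n)) : G →g G.tensorProd (cycleGraph n) where
  toFun u := (u, (ι).symm ((e) (copyLayer c hcop k u)).2)
  map_rel' {u w} h := by
    refine (adj_iff c hcop hn).2 ⟨h, ?_⟩
    simp only [layer_mk_copyLayer]
    have hne : copyLayer c hcop k u ≠ copyLayer c hcop k w := fun huw =>
      c.valid h (by rw [← fst_copyLayer c hcop k u, huw, fst_copyLayer])
    rcases copyLayer_mem c hcop k u with hu | hu <;>
      rcases copyLayer_mem c hcop k w with hw | hw <;>
      rw [hu, hw] at hne ⊢ <;> simp at hne ⊢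

def layering (hn : 2 ≤ n) :
    (G.tensorProd (cycleGraph n)).CyclicLayering G (2 * n) G.minDeg where
  layer := layer c hcop
  copy := copy c hcop hn
  bijOn_copy k := by
    refine ⟨fun u _ => ?_, fun u _ w _ h => congrArg Prod.fst h,
      fun v hv => ⟨v.1, trivial, ?_⟩⟩
    · change layer c hcop (u, _) ∈ ({k - 1, k} : Set (ZMod (2 * n)))
      rw [layer_mk_copyLayer]
      exact copyLayer_mem c hcop k u
    · obtain ⟨hv1, hv2⟩ := (layer_eq_iff c hcop).1 (rfl : layer c hcop v = _)
      have hk : copyLayer c hcop k v.1 = layer c hcop v := copyLayer_eq c hcop hv hv1.symm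
      refine Prod.ext rfl ?_
      change (ZMod.finEquiv n).symm _ = v.2
      rw [hk, ← hv2, RingEquiv.symm_apply_apply]
  le_ncard_adj_layer_add_one v :=
    minDeg_le_ncard_setOf_adj_layer_eq_add c hcop hn v (Or.inl rfl)
  le_ncard_adj_layer_sub_one v := by
    simpa only [sub_eq_add_neg] using
      minDeg_le_ncard_setOf_adj_layer_eq_add c hcop hn v (Or.inr rfl)

end TensorCycle

theorem vConn_tensorProd_cycleGraph_le [Finite V] (G : SimpleGraph V) {n : ℕ}
    (hn : 3 ≤ n) : (G.tensorProd (cycleGraph n)).vConn ≤ min (n * G.vConn) (2 * G.minDeg) := by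
  rcases isEmpty_or_nonempty V with hV | hV
  · simp [vConn_eq_zero_of_card_le_one _ (show Nat.card (V × Fin n) ≤ 1 by simp)]
  have : NeZero n := ⟨by omega⟩
  obtain ⟨u, hu⟩ := G.exists_ncard_neighborSet_eq_minDeg
  have hδ : (G.tensorProd (cycleGraph n)).vConn ≤ 2 * G.minDeg := by
    calc _ ≤ ((G.tensorProd (cycleGraph n)).neighborSet (u, 0)).ncard :=
          vConn_le_ncard_neighborSet _
      _ = 2 * G.minDeg := by
          rw [tensorProd_neighborSet, Set.ncard_prod, hu, ncard_neighborSet_cycleGraph hn,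
            mul_comm]
  obtain ⟨S, hS, hcut | hcard⟩ := G.exists_ncard_eq_vConn
  · refine le_min ?_ hδ
    calc _ ≤ (S ×ˢ (Set.univ : Set (Fin n))).ncard := (hcut.prod_univ _).vConn_le_ncard
      _ = n * G.vConn := by
          rw [Set.ncard_prod, Set.ncard_univ, Nat.card_eq_fintype_card, Fintype.card_fin, hS,
            mul_comm]
  · -- here `G` is so dense that `δ(G) ≤ |V| - 1 ≤ κ(G)`
    have hδκ : G.minDeg ≤ G.vConn := by
      have := Set.ncard_lt_card (s := G.neighborSet u) fun h =>
        G.loopless.irrefl u (show u ∈ G.neighborSet u by rw [h]; trivial)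
      omega
    exact hδ.trans (le_min (by nlinarith) le_rfl)

end SimpleGraph

theorem stmt_7_general (G : SimpleGraph α) (hGb : G.Colorable 2)
    (n : ℕ) (hn : 3 ≤ n) (hodd : Odd n) :
    (G.tensorProd (cycleGraph n)).vConn = min (n * G.vConn) (2 * G.minDeg) := by
  rcases finite_or_infinite α with hα | hα
  · have : NeZero n := ⟨by omega⟩
    obtain ⟨c⟩ : Nonempty (G.Coloring (ZMod 2)) := hGb
    exact (vConn_tensorProd_cycleGraph_le G hn).antisymm
      (TensorCycle.layering c hodd.coprime_two_left (by omega)).min_le_vConn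
  · have : Nonempty (Fin n) := ⟨⟨0, by omega⟩⟩
    rw [vConn_eq_zero_of_card_le_one _ (by simp), vConn_eq_zero_of_card_le_one G (by simp)]
    simp

/-- For a connected bipartite graph G and odd n ≥ 3,
κ(G × Cₙ) = min{n·κ(G), 2·δ(G)}. -/
theorem stmt_7 (G : SimpleGraph α) (hGc : G.Connected) (hGb : G.Colorable 2)
    (n : ℕ) (hn : 3 ≤ n) (hodd : Odd n) :
    (G.tensorProd (cycleGraph n)).vConn = min (n * G.vConn) (2 * G.minDeg) :=
  stmt_7_general G hGb n hn hodd
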